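/- In R₂, the nilpotency degrees of the short monomials are: δ(s)=2, δ(t)=3, δ(ts)=4, δ(st)=3, δ(t²)=2, δ(tst)=4, δ(sts)=2, δ(t²s)=4, δ(st²)=4, where δ(w) is the least n with wⁿ = 0. -/

import Mathlib

/-!
The tree-indexed vector space `V` over `ℚ` with basis the free monoid on two letters
(encoded as `List Bool`, with `false` the letter `0` and `true` the letter `1`).
The recursive matrices `s = [[0,0],[1,0]]` and `t = [[0,t],[0,s]]` of the ring `R₂`
act on the decomposition `V = ℚ·φ ⊕ 0V ⊕ 1V` by the block-matrix recursion.
-/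

noncomputable section

abbrev V : Type := List Bool →₀ ℚ

/-- Prefixing by a letter: the embedding `V → yV`. -/
def pre (b : Bool) : V →ₗ[ℚ] V := Finsupp.lmapDomain ℚ ℚ (List.cons b)

/-- Value of `s = [[0,0],[1,0]]` on a basis word. -/
def Sfun : List Bool → V
  | [] => 0
  | false :: u => Finsupp.single (true :: u) 1
  | true :: _ => 0

/-- Value of `t = [[0,t],[0,s]]` on a basis word, by recursion. -/
def Tfun : List Bool → V
  | [] => 0
  | false :: _ => 0
  | true :: u => pre false (Tfun u) + pre true (Sfun u)

/-- The generator `s` of `R₂`. -/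
def sR : Module.End ℚ V := Finsupp.linearCombination ℚ Sfun

/-- The generator `t` of `R₂`. -/
def tR : Module.End ℚ V := Finsupp.linearCombination ℚ Tfun

/-- The level-preserving operator with block form `[[e,0,0],[0,A,B],[0,C,D]]` on
`V = ℚ·φ ⊕ 0V ⊕ 1V`, written `e ⊕ [[A,B],[C,D]]`. -/
def blk (e : ℚ) (A B C D : Module.End ℚ V) : Module.End ℚ V :=
  Finsupp.linearCombination ℚ (fun w => match w with
    | [] => Finsupp.single ([] : List Bool) e
    | false :: u => pre false (A (Finsupp.single u 1)) + pre true (C (Finsupp.single u 1))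
    | true :: u => pre false (B (Finsupp.single u 1)) + pre true (D (Finsupp.single u 1)))

/-- The monomial in `s, t` given by a word (`false ↦ s`, `true ↦ t`). -/
def mono (w : List Bool) : Module.End ℚ V :=
  (w.map (fun b => if b then tR else sR)).prod

/-- The ring `R₂` generated by `s` and `t` (a non-unital subring of `End ℚ V`). -/
def R2 : NonUnitalSubring (Module.End ℚ V) := NonUnitalSubring.closure {sR, tR}

end

noncomputable section

/-- The nilpotency degree of `w`: the least `n ≥ 1` with `wⁿ = 0`. -/
def delta (w : Module.End ℚ V) : ℕ := sInf {n | 1 ≤ n ∧ w ^ n = 0}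

/-!
On `V = ℚ·φ ⊕ 0V ⊕ 1V` the generators are the block operators `s = 0 ⊕ [[0,0],[1,0]]` and
`t = 0 ⊕ [[0,t],[0,s]]`, and `blk` multiplies like a `2 × 2` block matrix. So every short monomial
is a block matrix whose entries are shorter monomials (`st = [[0,0],[0,t]]`, `ts = [[t,0],[s,0]]`,
`tst = [[0,t²],[0,st]]`, ...), its powers are triangular with explicit entries, and both `wⁿ = 0`
and `wⁿ⁻¹ ≠ 0` reduce to facts about shorter words, bottoming out at `s² = 0` and `s ≠ 0`.
-/

open Finsupp

theorem pre_single (b : Bool) (u : List Bool) (c : ℚ) :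
    pre b (single u c) = single (b :: u) c := by
  simp [pre]

theorem pre_apply_cons_self (b : Bool) (v : V) (u : List Bool) : pre b v (b :: u) = v u :=
  mapDomain_apply List.cons_injective v u

theorem pre_apply_cons_of_ne {b b' : Bool} (h : b' ≠ b) (v : V) (u : List Bool) :
    pre b v (b' :: u) = 0 :=
  mapDomain_of_notMem_range v _ (by simpa using h.symm)

theorem pre_false_add_pre_true_eq_zero {x y : V} (h : pre false x + pre true y = 0) :
    x = 0 ∧ y = 0 := by
  constructor <;> ext u
  · simpa [pre_apply_cons_self, pre_apply_cons_of_ne] using DFunLike.congr_fun h (false :: u)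
  · simpa [pre_apply_cons_self, pre_apply_cons_of_ne] using DFunLike.congr_fun h (true :: u)

theorem linearMap_ext_pre {M : Type*} [AddCommMonoid M] [Module ℚ M] {f g : V →ₗ[ℚ] M}
    (h_nil : f (single [] 1) = g (single [] 1))
    (h_false : ∀ v, f (pre false v) = g (pre false v))
    (h_true : ∀ v, f (pre true v) = g (pre true v)) : f = g := by
  refine lhom_ext' fun w => LinearMap.ext_ring ?_
  match w with
  | [] => simpa using h_nil
  | false :: u => simpa [pre_single] using h_false (single u 1)
  | true :: u => simpa [pre_single] using h_true (single u 1)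

section Blocks

variable (e : ℚ) (A B C D : Module.End ℚ V)

theorem blk_single_nil (c : ℚ) : blk e A B C D (single [] c) = single [] (c * e) := by
  simp [blk]

theorem blk_pre_false (v : V) :
    blk e A B C D (pre false v) = pre false (A v) + pre true (C v) := by
  have h : blk e A B C D ∘ₗ pre false = pre false ∘ₗ A + pre true ∘ₗ C :=
    lhom_ext' fun u => LinearMap.ext_ring (by simp [blk, pre_single])
  exact LinearMap.congr_fun h v

theorem blk_pre_true (v : V) :
    blk e A B C D (pre true v) = pre false (B v) + pre true (D v) := by
  have h : blk e A B C D ∘ₗ pre true = pre false ∘ₗ B + pre true ∘ₗ D :=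
    lhom_ext' fun u => LinearMap.ext_ring (by simp [blk, pre_single])
  exact LinearMap.congr_fun h v

theorem blk_eq_zero_iff : blk e A B C D = 0 ↔ e = 0 ∧ A = 0 ∧ B = 0 ∧ C = 0 ∧ D = 0 := by
  constructor
  · intro h
    have h_false v := pre_false_add_pre_true_eq_zero ((blk_pre_false e A B C D v).symm.trans
      (LinearMap.congr_fun h _))
    have h_true v := pre_false_add_pre_true_eq_zero ((blk_pre_true e A B C D v).symm.trans
      (LinearMap.congr_fun h _))
    have h_nil := (blk_single_nil e A B C D 1).symm.trans (LinearMap.congr_fun h _)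
    exact ⟨by simpa using h_nil, LinearMap.ext fun v => (h_false v).1,
      LinearMap.ext fun v => (h_true v).1, LinearMap.ext fun v => (h_false v).2,
      LinearMap.ext fun v => (h_true v).2⟩
  · rintro ⟨rfl, rfl, rfl, rfl, rfl⟩
    exact linearMap_ext_pre (by simp [blk_single_nil]) (by simp [blk_pre_false])
      (by simp [blk_pre_true])

theorem blk_one : blk 1 1 0 0 1 = 1 :=
  linearMap_ext_pre (by simp [blk_single_nil]) (by simp [blk_pre_false]) (by simp [blk_pre_true])

variable {e A B C D} (e' : ℚ) (A' B' C' D' : Module.End ℚ V)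

theorem blk_mul : blk e A B C D * blk e' A' B' C' D' =
    blk (e * e') (A * A' + B * C') (A * B' + B * D') (C * A' + D * C') (C * B' + D * D') := by
  refine linearMap_ext_pre ?_ (fun v => ?_) (fun v => ?_)
  · simp [blk_single_nil, mul_comm]
  · simp only [Module.End.mul_apply, blk_pre_false, blk_pre_true, map_add, LinearMap.add_apply]
    abel
  · simp only [Module.End.mul_apply, blk_pre_false, blk_pre_true, map_add, LinearMap.add_apply]
    abel

end Blocks

theorem sR_eq_blk : sR = blk 0 0 0 1 0 :=
  lhom_ext' fun u => LinearMap.ext_ring <| by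
    rcases u with _ | ⟨_ | _, u⟩ <;> simp [sR, Sfun, blk, pre_single]

theorem tR_eq_blk : tR = blk 0 0 tR 0 sR :=
  lhom_ext' fun u => LinearMap.ext_ring <| by
    rcases u with _ | ⟨_ | _, u⟩ <;> simp [sR, tR, Tfun, blk]

section BlockPowers

variable (A B C D : Module.End ℚ V)

theorem blk_diag_pow (e : ℚ) (n : ℕ) : blk e A 0 0 D ^ n = blk (e ^ n) (A ^ n) 0 0 (D ^ n) := by
  induction n with
  | zero => simp [blk_one]
  | succ n ih => simp [pow_succ, ih, blk_mul]

theorem blk_left_column_pow (n : ℕ) :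
    blk 0 A 0 C 0 ^ (n + 1) = blk 0 (A ^ (n + 1)) 0 (C * A ^ n) 0 := by
  induction n with
  | zero => simp
  | succ n ih => rw [pow_succ, ih, blk_mul]; simp [pow_succ, mul_assoc]

theorem blk_right_column_pow (n : ℕ) :
    blk 0 0 B 0 D ^ (n + 1) = blk 0 0 (B * D ^ n) 0 (D ^ (n + 1)) := by
  induction n with
  | zero => simp
  | succ n ih => rw [pow_succ, ih, blk_mul]; simp [pow_succ, mul_assoc]

end BlockPowers

theorem delta_eq_succ {w : Module.End ℚ V} {n : ℕ} (h : w ^ (n + 1) = 0) (hn : w ^ n ≠ 0) :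
    delta w = n + 1 := by
  refine le_antisymm (Nat.sInf_le ⟨n.succ_pos, h⟩) (le_csInf ⟨n + 1, n.succ_pos, h⟩ ?_)
  rintro m ⟨-, hwm⟩
  by_contra! hlt
  exact hn (pow_eq_zero_of_le (by omega) hwm)

theorem delta_congr {w u : Module.End ℚ V} (h : ∀ n, n ≠ 0 → (w ^ n = 0 ↔ u ^ n = 0)) :
    delta w = delta u := by
  unfold delta
  congr 1
  ext n
  exact and_congr_right fun hn => h n (by omega)

theorem delta_blk_left (A : Module.End ℚ V) : delta (blk 0 A 0 0 0) = delta A :=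
  delta_congr fun n hn => by simp [blk_diag_pow, blk_eq_zero_iff, hn]

theorem delta_blk_right (D : Module.End ℚ V) : delta (blk 0 0 0 0 D) = delta D :=
  delta_congr fun n hn => by simp [blk_diag_pow, blk_eq_zero_iff, hn]

theorem sR_sq : sR ^ 2 = 0 := by
  rw [sR_eq_blk, sq, blk_mul]; simp [blk_eq_zero_iff]

theorem tR_mul_sR : tR * sR = blk 0 tR 0 sR 0 := by
  -- `sR` is rewritten first because `tR_eq_blk` reintroduces `sR` as a block.
  conv_lhs => rw [sR_eq_blk, tR_eq_blk, blk_mul]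
  simp

theorem sR_mul_tR : sR * tR = blk 0 0 0 0 tR := by
  conv_lhs => rw [tR_eq_blk, sR_eq_blk, blk_mul]
  simp

theorem tR_sq : tR ^ 2 = blk 0 0 (tR * sR) 0 0 := by
  conv_lhs => rw [sq, tR_eq_blk, blk_mul]
  simp [← sq, sR_sq]

theorem tR_mul_sR_mul_tR : tR * sR * tR = blk 0 0 (tR ^ 2) 0 (sR * tR) := by
  conv_lhs => rw [tR_mul_sR]; enter [2]; rw [tR_eq_blk]
  rw [blk_mul]; simp [sq]

theorem sR_mul_tR_mul_sR : sR * tR * sR = blk 0 0 0 tR 0 := by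
  conv_lhs => rw [sR_mul_tR, sR_eq_blk, blk_mul]
  simp

theorem tR_sq_mul_sR : tR ^ 2 * sR = blk 0 (tR * sR) 0 0 0 := by
  conv_lhs => rw [tR_sq]; enter [2]; rw [sR_eq_blk]
  rw [blk_mul]; simp

theorem sR_mul_tR_sq : sR * tR ^ 2 = blk 0 0 0 0 (tR * sR) := by
  conv_lhs => rw [tR_sq]; enter [1]; rw [sR_eq_blk]
  rw [blk_mul]; simp

theorem sR_ne_zero : sR ≠ 0 := by
  simp [sR_eq_blk, blk_eq_zero_iff]

theorem tR_ne_zero : tR ≠ 0 := by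
  rw [tR_eq_blk]; simp [blk_eq_zero_iff, sR_ne_zero]

theorem tR_mul_sR_ne_zero : tR * sR ≠ 0 := by
  simp [tR_mul_sR, blk_eq_zero_iff, tR_ne_zero]

theorem tR_pow_succ (n : ℕ) : tR ^ (n + 1) = blk 0 0 (tR * sR ^ n) 0 (sR ^ (n + 1)) := by
  conv_lhs => rw [tR_eq_blk, blk_right_column_pow]

theorem tR_pow_three : tR ^ 3 = 0 := by
  rw [tR_pow_succ 2, pow_succ sR 2, sR_sq]
  simp [blk_eq_zero_iff]

theorem tR_sq_ne_zero : tR ^ 2 ≠ 0 := by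
  simp [tR_sq, blk_eq_zero_iff, tR_mul_sR_ne_zero]

theorem tR_sq_mul_sR_ne_zero : tR ^ 2 * sR ≠ 0 := by
  simp [tR_sq_mul_sR, blk_eq_zero_iff, tR_mul_sR_ne_zero]

theorem sR_mul_tR_sq_ne_zero : sR * tR ^ 2 ≠ 0 := by
  simp [sR_mul_tR_sq, blk_eq_zero_iff, tR_mul_sR_ne_zero]

theorem delta_sR : delta sR = 2 :=
  delta_eq_succ sR_sq (by simpa using sR_ne_zero)

theorem delta_tR : delta tR = 3 :=
  delta_eq_succ tR_pow_three tR_sq_ne_zero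

theorem delta_tR_mul_sR : delta (tR * sR) = 4 := by
  rw [tR_mul_sR]
  refine delta_eq_succ (n := 3) ?_ ?_ <;> rw [blk_left_column_pow]
  · simp [blk_eq_zero_iff, pow_succ _ 3, tR_pow_three]
  · simp [blk_eq_zero_iff, sR_mul_tR_sq_ne_zero]

theorem delta_tR_sq : delta (tR ^ 2) = 2 := by
  refine delta_eq_succ ?_ (by simpa using tR_sq_ne_zero)
  rw [tR_sq, blk_right_column_pow]
  simp [blk_eq_zero_iff]

theorem delta_tR_mul_sR_mul_tR : delta (tR * sR * tR) = 4 := by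
  have h_zero : (sR * tR) ^ 3 = 0 := by
    simp [sR_mul_tR, blk_diag_pow, tR_pow_three, blk_eq_zero_iff]
  have h_ts_tt : tR * sR * tR ^ 2 ≠ 0 := by
    rw [tR_mul_sR, tR_sq, blk_mul]
    simp [blk_eq_zero_iff, ← mul_assoc, ← sq, tR_sq_mul_sR_ne_zero]
  have h_ne : tR ^ 2 * (sR * tR) ^ 2 ≠ 0 := by
    rw [tR_sq, sR_mul_tR, blk_diag_pow, blk_mul]
    simp [blk_eq_zero_iff, h_ts_tt]
  rw [tR_mul_sR_mul_tR]
  refine delta_eq_succ (n := 3) ?_ ?_ <;> rw [blk_right_column_pow]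
  · simp [blk_eq_zero_iff, h_zero, pow_succ _ 3]
  · simp [blk_eq_zero_iff, h_ne]

theorem delta_sR_mul_tR_mul_sR : delta (sR * tR * sR) = 2 := by
  rw [sR_mul_tR_mul_sR]
  refine delta_eq_succ (n := 1) ?_ (by simpa [blk_eq_zero_iff] using tR_ne_zero)
  rw [blk_left_column_pow]
  simp [blk_eq_zero_iff]

/-- Nilpotency degrees of the short monomials of `R₂`:
`δ(s)=2, δ(t)=3, δ(ts)=4, δ(st)=3, δ(t²)=2, δ(tst)=4, δ(sts)=2, δ(t²s)=4, δ(st²)=4`. -/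
theorem short_monomial_degrees :
    delta sR = 2 ∧
    delta tR = 3 ∧
    delta (tR * sR) = 4 ∧
    delta (sR * tR) = 3 ∧
    delta (tR ^ 2) = 2 ∧
    delta (tR * sR * tR) = 4 ∧
    delta (sR * tR * sR) = 2 ∧
    delta (tR ^ 2 * sR) = 4 ∧
    delta (sR * tR ^ 2) = 4 :=
  ⟨delta_sR, delta_tR, delta_tR_mul_sR,
    by rw [sR_mul_tR, delta_blk_right, delta_tR],
    delta_tR_sq, delta_tR_mul_sR_mul_tR, delta_sR_mul_tR_mul_sR,
    by rw [tR_sq_mul_sR, delta_blk_left, delta_tR_mul_sR],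
    by rw [sR_mul_tR_sq, delta_blk_right, delta_tR_mul_sR]⟩

end
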